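/- Let 1 < α < 2 and d ∈ (0, 1 − 1/α). There exist constants M = 1/(Γ(d) · (α(1−d) − 1)^{1/α}) > 0 and N = 1/(Γ(d) · d) > 0 such that for every g ∈ L^1(ℝ) ∩ L^α(ℝ), ‖I_-^d g‖_α ≤ M ‖g‖_1 + N ‖g‖_α. -/

import Mathlib

/-!
After the substitution `t = x + u`, `|I_-^d g (x)| ≤ Γ(d)⁻¹ ∫_0^∞ |g(x+u)| u^(d-1) du`. Split the
kernel `u^(d-1)` at `u = 1`: on `(0, 1]` it is integrable with integral `1/d`, and on `(1, ∞)` it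
lies in `L^α` with norm `(α(1-d) - 1)^(-1/α)`, because `α(1-d) > 1`. Young's inequality for the
correlation `x ↦ ∫ G(x+u) k(u) du`, once with `‖k‖_1 ‖G‖_α` and once with `‖k‖_α ‖G‖_1` on the
right (each a weighted Hölder inequality followed by Tonelli), and Minkowski's inequality give the
bound.
-/

open MeasureTheory Set
open scoped ENNReal

/-- The right-sided Riemann–Liouville fractional integral of order `d`. -/
noncomputable def RLright (d : ℝ) (f : ℝ → ℝ) (x : ℝ) : ℝ :=
  (1 / Real.Gamma d) * ∫ t in Set.Ioi x, f t * (t - x) ^ (d - 1)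

theorem ENNReal.rpow_lintegral_mul_le {X : Type*} [MeasurableSpace X] (ν : Measure X) {p : ℝ}
    (hp : 1 < p) {f w : X → ℝ≥0∞} (hf : AEMeasurable f ν) (hw : AEMeasurable w ν) :
    (∫⁻ x, f x * w x ∂ν) ^ p ≤ (∫⁻ x, w x ∂ν) ^ (p - 1) * ∫⁻ x, f x ^ p * w x ∂ν := by
  set q := p.conjExponent
  have hpq : p.HolderConjugate q := .conjExponent hp
  have hp0 : 0 < p := hpq.pos
  have hq0 : 0 < q := hpq.symm.pos
  have hsplit : ∀ x, f x * w x = w x ^ (1 / q) * (f x * w x ^ (1 / p)) := fun x => by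
    rw [mul_left_comm, ← ENNReal.rpow_add_of_nonneg _ _ (by positivity) (by positivity),
      one_div, one_div, add_comm, hpq.inv_add_inv_eq_one, ENNReal.rpow_one]
  have holder := ENNReal.lintegral_mul_le_Lp_mul_Lq ν hpq.symm
    (hw.pow_const (1 / q)) (hf.mul (hw.pow_const (1 / p)))
  simp only [Pi.mul_apply, ← hsplit, ← ENNReal.rpow_mul, one_div_mul_cancel hq0.ne',
    one_div_mul_cancel hp0.ne', ENNReal.rpow_one, ENNReal.mul_rpow_of_nonneg _ _ hp0.le] at holder
  calc (∫⁻ x, f x * w x ∂ν) ^ p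
      ≤ ((∫⁻ x, w x ∂ν) ^ (1 / q) * (∫⁻ x, f x ^ p * w x ∂ν) ^ (1 / p)) ^ p := by
        gcongr
    _ = (∫⁻ x, w x ∂ν) ^ (p - 1) * ∫⁻ x, f x ^ p * w x ∂ν := by
        rw [ENNReal.mul_rpow_of_nonneg _ _ hp0.le, ← ENNReal.rpow_mul, ← ENNReal.rpow_mul,
          one_div_mul_cancel hp0.ne', ENNReal.rpow_one, one_div_mul_eq_div,
          hpq.div_conj_eq_sub_one]

theorem ENNReal.rpow_sub_one_mul_self (x : ℝ≥0∞) {p : ℝ} (hp : 1 ≤ p) :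
    x ^ (p - 1) * x = x ^ p := by
  conv_rhs => rw [← sub_add_cancel p 1, ENNReal.rpow_add_of_nonneg _ _ (by linarith) zero_le_one,
    ENNReal.rpow_one]

theorem eLpNorm_ofReal_eq_lintegral_rpow {X : Type*} [MeasurableSpace X] (μ : Measure X) {p : ℝ}
    (hp : 0 < p) (F : X → ℝ≥0∞) :
    eLpNorm F (ENNReal.ofReal p) μ = (∫⁻ x, F x ^ p ∂μ) ^ (1 / p) := by
  simp [eLpNorm_eq_lintegral_rpow_enorm_toReal (ENNReal.ofReal_pos.mpr hp).ne'
    ENNReal.ofReal_ne_top, ENNReal.toReal_ofReal hp.le]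

section ShiftConv

variable {E : Type*} [MeasurableSpace E] [AddCommGroup E]

noncomputable def shiftConv (ν : Measure E) (G k : E → ℝ≥0∞) (x : E) : ℝ≥0∞ :=
  ∫⁻ u, G (x + u) * k u ∂ν

theorem shiftConv_restrict_union (ν : Measure E) (G k : E → ℝ≥0∞) {s t : Set E}
    (hst : Disjoint s t) (ht : MeasurableSet t) :
    shiftConv (ν.restrict (s ∪ t)) G k =
      shiftConv (ν.restrict s) G k + shiftConv (ν.restrict t) G k := by
  ext x
  rw [shiftConv, Measure.restrict_union hst ht]
  exact lintegral_add_measure _ _ _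

variable [MeasurableAdd₂ E]

theorem measurable_shiftConv (ν : Measure E) [SFinite ν] {G k : E → ℝ≥0∞} (hG : Measurable G)
    (hk : Measurable k) : Measurable (shiftConv ν G k) :=
  Measurable.lintegral_prod_right' (f := fun p : E × E => G (p.1 + p.2) * k p.2) (by fun_prop)

variable {μ : Measure E} [SFinite μ] [μ.IsAddRightInvariant] {p : ℝ} {G k : E → ℝ≥0∞}

theorem eLpNorm_shiftConv_le_lintegral_mul (hp : 1 < p) (ν : Measure E) [SFinite ν]
    (hG : Measurable G) (hk : Measurable k) :
    eLpNorm (shiftConv ν G k) (ENNReal.ofReal p) μ ≤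
      (∫⁻ u, k u ∂ν) * eLpNorm G (ENNReal.ofReal p) μ := by
  have hp0 : 0 < p := by linarith
  have hpt : ∀ x, shiftConv ν G k x ^ p ≤
      (∫⁻ u, k u ∂ν) ^ (p - 1) * ∫⁻ u, G (x + u) ^ p * k u ∂ν := fun x =>
    ENNReal.rpow_lintegral_mul_le ν hp (by fun_prop) hk.aemeasurable
  have htonelli : ∫⁻ x, ∫⁻ u, G (x + u) ^ p * k u ∂ν ∂μ = (∫⁻ x, G x ^ p ∂μ) * ∫⁻ u, k u ∂ν := by
    rw [lintegral_lintegral_swap (by fun_prop)]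
    calc ∫⁻ u, ∫⁻ x, G (x + u) ^ p * k u ∂μ ∂ν = ∫⁻ u, (∫⁻ x, G x ^ p ∂μ) * k u ∂ν := by
          congr with u
          rw [lintegral_mul_const _ (by fun_prop), lintegral_add_right_eq_self (fun x => G x ^ p)]
      _ = _ := lintegral_const_mul _ hk
  rw [eLpNorm_ofReal_eq_lintegral_rpow μ hp0, eLpNorm_ofReal_eq_lintegral_rpow μ hp0]
  calc (∫⁻ x, shiftConv ν G k x ^ p ∂μ) ^ (1 / p)
      ≤ ((∫⁻ u, k u ∂ν) ^ p * ∫⁻ x, G x ^ p ∂μ) ^ (1 / p) := by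
        gcongr
        refine (lintegral_mono hpt).trans_eq ?_
        rw [lintegral_const_mul _ (by fun_prop), htonelli, mul_comm _ (∫⁻ u, k u ∂ν), ← mul_assoc,
          ENNReal.rpow_sub_one_mul_self _ hp.le]
    _ = (∫⁻ u, k u ∂ν) * (∫⁻ x, G x ^ p ∂μ) ^ (1 / p) := by
        rw [ENNReal.mul_rpow_of_nonneg _ _ (by positivity), ← ENNReal.rpow_mul,
          mul_one_div_cancel hp0.ne', ENNReal.rpow_one]

theorem eLpNorm_shiftConv_restrict_le_eLpNorm_mul (hp : 1 < p) (s : Set E) (hG : Measurable G)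
    (hk : Measurable k) :
    eLpNorm (shiftConv (μ.restrict s) G k) (ENNReal.ofReal p) μ ≤
      eLpNorm k (ENNReal.ofReal p) (μ.restrict s) * eLpNorm G 1 μ := by
  have hp0 : 0 < p := by linarith
  have hshift : ∀ x, ∫⁻ u in s, G (x + u) ∂μ ≤ ∫⁻ x, G x ∂μ := fun x => by
    simpa only [add_comm x] using
      (setLIntegral_le_lintegral s _).trans_eq (lintegral_add_right_eq_self G x)
  have hpt : ∀ x, shiftConv (μ.restrict s) G k x ^ p ≤
      (∫⁻ x, G x ∂μ) ^ (p - 1) * ∫⁻ u in s, k u ^ p * G (x + u) ∂μ := fun x => by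
    simp only [shiftConv, mul_comm (G _)]
    exact (ENNReal.rpow_lintegral_mul_le _ hp hk.aemeasurable (by fun_prop)).trans
      (by gcongr ?_ ^ _ * _; exact hshift x)
  have htonelli : ∫⁻ x, ∫⁻ u in s, k u ^ p * G (x + u) ∂μ ∂μ =
      (∫⁻ u in s, k u ^ p ∂μ) * ∫⁻ x, G x ∂μ := by
    rw [lintegral_lintegral_swap (by fun_prop)]
    calc ∫⁻ u in s, ∫⁻ x, k u ^ p * G (x + u) ∂μ ∂μ = ∫⁻ u in s, k u ^ p * ∫⁻ x, G x ∂μ ∂μ := by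
          congr with u
          rw [lintegral_const_mul _ (by fun_prop), lintegral_add_right_eq_self G]
      _ = _ := lintegral_mul_const _ (by fun_prop)
  rw [eLpNorm_ofReal_eq_lintegral_rpow μ hp0, eLpNorm_ofReal_eq_lintegral_rpow _ hp0,
    eLpNorm_one_eq_lintegral_enorm]
  simp only [enorm_eq_self]
  calc (∫⁻ x, shiftConv (μ.restrict s) G k x ^ p ∂μ) ^ (1 / p)
      ≤ ((∫⁻ u in s, k u ^ p ∂μ) * (∫⁻ x, G x ∂μ) ^ p) ^ (1 / p) := by
        gcongr
        refine (lintegral_mono hpt).trans_eq ?_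
        rw [lintegral_const_mul _ (by fun_prop), htonelli, mul_left_comm,
          ENNReal.rpow_sub_one_mul_self _ hp.le]
    _ = (∫⁻ u in s, k u ^ p ∂μ) ^ (1 / p) * ∫⁻ x, G x ∂μ := by
        rw [ENNReal.mul_rpow_of_nonneg _ _ (by positivity), ← ENNReal.rpow_mul,
          mul_one_div_cancel hp0.ne', ENNReal.rpow_one]

end ShiftConv

theorem RLright_eq_integral_Ioi_zero (d : ℝ) (f : ℝ → ℝ) (x : ℝ) :
    RLright d f x = 1 / Real.Gamma d * ∫ u in Ioi 0, f (x + u) * u ^ (d - 1) := by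
  rw [RLright, ← (measurePreserving_add_left volume x).setIntegral_preimage_emb
    (measurableEmbedding_addLeft x), preimage_const_add_Ioi, sub_self]
  simp only [add_sub_cancel_left]

theorem measurable_RLright (d : ℝ) {f : ℝ → ℝ} (hf : Measurable f) : Measurable (RLright d f) := by
  simp only [funext (RLright_eq_integral_Ioi_zero d f)]
  exact measurable_const.mul (StronglyMeasurable.integral_prod_right'
    (f := fun p : ℝ × ℝ => f (p.1 + p.2) * p.2 ^ (d - 1)) (by fun_prop)).measurable

theorem lintegral_Ioc_zero_one_enorm_rpow {r : ℝ} (hr : -1 < r) :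
    ∫⁻ u in Ioc (0 : ℝ) 1, ‖u ^ r‖ₑ = ENNReal.ofReal (1 / (r + 1)) := by
  have hint : IntegrableOn (fun u : ℝ => u ^ r) (Ioc 0 1) :=
    (intervalIntegrable_iff_integrableOn_Ioc_of_le zero_le_one).mp
      (intervalIntegral.intervalIntegrable_rpow' hr)
  rw [← ofReal_integral_norm_eq_lintegral_enorm hint,
    setIntegral_congr_fun measurableSet_Ioc fun u hu =>
      Real.norm_of_nonneg (Real.rpow_nonneg hu.1.le r),
    ← intervalIntegral.integral_of_le zero_le_one, integral_rpow (Or.inl hr), Real.one_rpow,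
    Real.zero_rpow (by linarith), sub_zero]

theorem eLpNorm_rpow_restrict_Ioi_one {p r : ℝ} (hp : 0 < p) (h : r * p < -1) :
    eLpNorm (fun u : ℝ => u ^ r) (ENNReal.ofReal p) (volume.restrict (Ioi 1)) =
      ENNReal.ofReal (-1 / (r * p + 1)) ^ (1 / p) := by
  have hpow : ∀ u ∈ Ioi (1 : ℝ), ‖u ^ r‖ₑ ^ p = ENNReal.ofReal (u ^ (r * p)) := fun u hu => by
    have hu0 : 0 ≤ u := zero_le_one.trans (le_of_lt hu)
    rw [Real.enorm_of_nonneg (Real.rpow_nonneg hu0 r),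
      ENNReal.ofReal_rpow_of_nonneg (Real.rpow_nonneg hu0 r) hp.le, ← Real.rpow_mul hu0]
  rw [← eLpNorm_enorm, eLpNorm_ofReal_eq_lintegral_rpow _ hp,
    setLIntegral_congr_fun measurableSet_Ioi hpow,
    ← ofReal_integral_eq_lintegral_ofReal (integrableOn_Ioi_rpow_of_lt h one_pos)
      ((ae_restrict_iff' measurableSet_Ioi).mpr (ae_of_all _ fun u hu =>
        Real.rpow_nonneg (zero_le_one.trans (le_of_lt hu)) _)),
    integral_Ioi_rpow_of_lt h one_pos, Real.one_rpow, neg_div]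

theorem eLpNorm_RLright_le_shiftConv (d : ℝ) (g : ℝ → ℝ) (p : ℝ≥0∞) :
    eLpNorm (RLright d g) p volume ≤ ‖1 / Real.Gamma d‖ₑ *
      eLpNorm (shiftConv (volume.restrict (Ioi 0)) (‖g ·‖ₑ) (‖· ^ (d - 1)‖ₑ)) p volume := by
  have hRL : RLright d g = (1 / Real.Gamma d) • fun x => ∫ u in Ioi 0, g (x + u) * u ^ (d - 1) :=
    funext (RLright_eq_integral_Ioi_zero d g)
  rw [hRL]
  refine eLpNorm_const_smul_le.trans ?_
  gcongr
  refine eLpNorm_mono_enorm fun x => ?_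
  rw [enorm_eq_self]
  exact (enorm_integral_le_lintegral_enorm _).trans_eq (lintegral_congr fun u => enorm_mul _ _)

theorem eLpNorm_RLright_le {α d : ℝ} (hα : 1 < α) (hd : 0 < d) (hαd : 1 < α * (1 - d))
    {g : ℝ → ℝ} (hg : Measurable g) :
    eLpNorm (RLright d g) (ENNReal.ofReal α) volume ≤
      ENNReal.ofReal (1 / (Real.Gamma d * (α * (1 - d) - 1) ^ (1 / α))) * eLpNorm g 1 volume +
        ENNReal.ofReal (1 / (Real.Gamma d * d)) * eLpNorm g (ENNReal.ofReal α) volume := by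
  have hα0 : 0 < α := by linarith
  have hΓ : 0 < Real.Gamma d := Real.Gamma_pos_of_pos hd
  set G : ℝ → ℝ≥0∞ := (‖g ·‖ₑ)
  set k : ℝ → ℝ≥0∞ := (‖· ^ (d - 1)‖ₑ)
  have hG : Measurable G := by fun_prop
  have hk : Measurable k := by fun_prop
  have hN : ‖1 / Real.Gamma d‖ₑ * ENNReal.ofReal (1 / (d - 1 + 1)) =
      ENNReal.ofReal (1 / (Real.Gamma d * d)) := by
    rw [sub_add_cancel, Real.enorm_of_nonneg (by positivity), ← ENNReal.ofReal_mul (by positivity)]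
    congr 1
    field_simp
  have hM : ‖1 / Real.Gamma d‖ₑ * ENNReal.ofReal (-1 / ((d - 1) * α + 1)) ^ (1 / α) =
      ENNReal.ofReal (1 / (Real.Gamma d * (α * (1 - d) - 1) ^ (1 / α))) := by
    have hP : 0 < α * (1 - d) - 1 := by linarith
    rw [show (d - 1) * α + 1 = -(α * (1 - d) - 1) by ring, neg_div_neg_eq,
      Real.enorm_of_nonneg (by positivity), ENNReal.ofReal_rpow_of_nonneg (by positivity)
      (by positivity), ← ENNReal.ofReal_mul (by positivity), Real.div_rpow zero_le_one hP.le,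
      Real.one_rpow]
    congr 1
    field_simp
  calc eLpNorm (RLright d g) (ENNReal.ofReal α) volume
      ≤ ‖1 / Real.Gamma d‖ₑ * eLpNorm (shiftConv (volume.restrict (Ioi 0)) G k)
          (ENNReal.ofReal α) volume := eLpNorm_RLright_le_shiftConv d g _
    _ ≤ ‖1 / Real.Gamma d‖ₑ * (eLpNorm (shiftConv (volume.restrict (Ioc 0 1)) G k)
          (ENNReal.ofReal α) volume + eLpNorm (shiftConv (volume.restrict (Ioi 1)) G k)
          (ENNReal.ofReal α) volume) := by
        rw [← Ioc_union_Ioi_eq_Ioi zero_le_one,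
          shiftConv_restrict_union _ _ _ (Ioc_disjoint_Ioi le_rfl) measurableSet_Ioi]
        gcongr
        exact eLpNorm_add_le (measurable_shiftConv _ hG hk).aestronglyMeasurable
          (measurable_shiftConv _ hG hk).aestronglyMeasurable (by simpa using hα.le)
    _ ≤ ‖1 / Real.Gamma d‖ₑ * ((∫⁻ u in Ioc 0 1, k u) * eLpNorm G (ENNReal.ofReal α) volume +
          eLpNorm k (ENNReal.ofReal α) (volume.restrict (Ioi 1)) * eLpNorm G 1 volume) := by
        gcongr
        · exact eLpNorm_shiftConv_le_lintegral_mul hα _ hG hk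
        · exact eLpNorm_shiftConv_restrict_le_eLpNorm_mul hα _ hG hk
    _ = _ := by
        rw [lintegral_Ioc_zero_one_enorm_rpow (by linarith), eLpNorm_enorm, eLpNorm_enorm,
          eLpNorm_enorm, eLpNorm_rpow_restrict_Ioi_one hα0 (by nlinarith), mul_add, ← mul_assoc,
          ← mul_assoc, hN, hM, add_comm]

/-- with `M = 1/(Γ(d) (α(1-d)-1)^{1/α})` and `N = 1/(Γ(d) d)`,
both positive, every `g ∈ L^1(ℝ) ∩ L^α(ℝ)` satisfies
`‖I_-^d g‖_α ≤ M ‖g‖_1 + N ‖g‖_α`. -/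
theorem stmt6 (α d : ℝ) (hα : 1 < α ∧ α < 2)
    (hd : d ∈ Set.Ioo (0 : ℝ) (1 - 1 / α)) :
    0 < 1 / (Real.Gamma d * (α * (1 - d) - 1) ^ (1 / α)) ∧
    0 < 1 / (Real.Gamma d * d) ∧
    ∀ g : ℝ → ℝ, Measurable g →
      MemLp g 1 (volume : Measure ℝ) →
      MemLp g (ENNReal.ofReal α) (volume : Measure ℝ) →
      (∫ x : ℝ, |RLright d g x| ^ α) ^ (1 / α) ≤
        (1 / (Real.Gamma d * (α * (1 - d) - 1) ^ (1 / α))) * (∫ x : ℝ, |g x|) +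
          (1 / (Real.Gamma d * d)) * (∫ x : ℝ, |g x| ^ α) ^ (1 / α) := by
  obtain ⟨hα1, -⟩ := hα
  obtain ⟨hd0, hd1⟩ := hd
  have hα0 : 0 < α := by linarith
  have hαd : 1 < α * (1 - d) := by
    have := mul_lt_mul_of_pos_left (lt_sub_comm.mp hd1) hα0
    rwa [mul_one_div_cancel hα0.ne'] at this
  have hΓ : 0 < Real.Gamma d := Real.Gamma_pos_of_pos hd0
  have hP : 0 < (α * (1 - d) - 1) ^ (1 / α) := Real.rpow_pos_of_pos (by linarith) _
  refine ⟨by positivity, by positivity, fun g hg hg1 hgα => ?_⟩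
  have hp : ENNReal.ofReal α ≠ 0 := (ENNReal.ofReal_pos.mpr hα0).ne'
  have hbound := eLpNorm_RLright_le hα1 hd0 hαd hg
  have hRL : MemLp (RLright d g) (ENNReal.ofReal α) :=
    ⟨(measurable_RLright d hg).aestronglyMeasurable,
      hbound.trans_lt (by have := hg1.2; have := hgα.2; finiteness)⟩
  rw [hRL.eLpNorm_eq_integral_rpow_norm hp ENNReal.ofReal_ne_top,
    hgα.eLpNorm_eq_integral_rpow_norm hp ENNReal.ofReal_ne_top, eLpNorm_one_eq_lintegral_enorm,
    ← ofReal_integral_norm_eq_lintegral_enorm (memLp_one_iff_integrable.mp hg1),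
    ENNReal.toReal_ofReal hα0.le,
    ← ENNReal.ofReal_mul (by positivity), ← ENNReal.ofReal_mul (by positivity),
    ← ENNReal.ofReal_add (by positivity) (by positivity),
    ENNReal.ofReal_le_ofReal_iff (by positivity)] at hbound
  simpa only [Real.norm_eq_abs, one_div] using hbound
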